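/- arXiv:1207.1989 — 2 statements merged into one kernel-verified Lean document; each statement's English description precedes it below -/
import Mathlib

section
/- One has g(0) = 1 and g(β) → 1 − n as β → −∞; consequently there exists a unique β̄ ∈ (−∞, 0) such that g(β̄) = 0, and g(β) < 0 for β < β̄ while g(β) > 0 for β̄ < β < μ_1. -/
/-!
Writing `g β = 1 + ∑ₖ β / (μₖ - β)`, each summand `β / (m - β) = -1 + m / (m - β)` is continuous
and strictly increasing on `(-∞, m)` and tends to `-1` at `-∞`. Hence `g` is continuous and
strictly increasing on `(-∞, μ₁)`, with `g 0 = 1 > 0` and limit `1 - n < 0` at `-∞`; the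
intermediate value theorem and strict monotonicity give the unique zero and the sign pattern.
-/

open Filter Set Topology

theorem strictMonoOn_div_sub_self {m : ℝ} (hm : 0 < m) :
    StrictMonoOn (fun β : ℝ => β / (m - β)) (Iio m) := by
  intro a ha b hb hab
  rw [div_lt_div_iff₀ (sub_pos.mpr ha) (sub_pos.mpr hb)]
  nlinarith

theorem continuousOn_div_sub_self (m : ℝ) :
    ContinuousOn (fun β : ℝ => β / (m - β)) (Iio m) :=
  continuousOn_id.div (continuousOn_const.sub continuousOn_id)
    fun _ hβ => (sub_pos.mpr hβ).ne'

theorem tendsto_div_sub_self_atBot (m : ℝ) :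
    Tendsto (fun β : ℝ => β / (m - β)) atBot (𝓝 (-1)) := by
  have hden : Tendsto (fun β : ℝ => m - β) atBot atTop :=
    tendsto_atTop_add_const_left _ _ tendsto_neg_atBot_atTop
  have hlim : Tendsto (fun β : ℝ => -1 + m * (m - β)⁻¹) atBot (𝓝 (-1)) := by
    simpa using ((tendsto_inv_atTop_zero.comp hden).const_mul m).const_add (-1 : ℝ)
  refine hlim.congr' ?_
  filter_upwards [eventually_lt_atBot m] with β hβ
  field_simp [(sub_pos.mpr hβ).ne']
  ring

section SumDivSubSelf

variable {ι : Type*} [Fintype ι] {μ : ι → ℝ} {m : ℝ}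

theorem strictMonoOn_sum_div_sub_self [Nonempty ι] (hμ : ∀ k, 0 < μ k) (hm : ∀ k, m ≤ μ k) :
    StrictMonoOn (fun β : ℝ => ∑ k, β / (μ k - β)) (Iio m) := fun _ ha _ hb hab =>
  Finset.sum_lt_sum_of_nonempty Finset.univ_nonempty fun k _ =>
    strictMonoOn_div_sub_self (hμ k) (Iio_subset_Iio (hm k) ha) (Iio_subset_Iio (hm k) hb) hab

theorem continuousOn_sum_div_sub_self (hm : ∀ k, m ≤ μ k) :
    ContinuousOn (fun β : ℝ => ∑ k, β / (μ k - β)) (Iio m) :=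
  continuousOn_finsetSum _ fun k _ =>
    (continuousOn_div_sub_self (μ k)).mono (Iio_subset_Iio (hm k))

theorem tendsto_sum_div_sub_self_atBot (μ : ι → ℝ) :
    Tendsto (fun β : ℝ => ∑ k, β / (μ k - β)) atBot (𝓝 (-Fintype.card ι)) := by
  simpa using tendsto_finsetSum Finset.univ fun k _ => tendsto_div_sub_self_atBot (μ k)

end SumDivSubSelf

theorem StrictMonoOn.existsUnique_sign_change {f : ℝ → ℝ} {a b m : ℝ}
    (hmono : StrictMonoOn f (Iio m)) (hcont : ContinuousOn f (Iio m))
    (ha : a < m) (hfa : 0 < f a) (hb : b < m) (hfb : f b < 0) :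
    ∃! x, x < a ∧ f x = 0 ∧ (∀ β < x, f β < 0) ∧ (∀ β, x < β → β < m → 0 < f β) := by
  have hba : b < a := hmono.lt_iff_lt hb ha |>.mp (hfb.trans hfa)
  obtain ⟨x, hx, hfx⟩ := intermediate_value_Icc hba.le
    (hcont.mono fun y hy => hy.2.trans_lt ha) ⟨hfb.le, hfa.le⟩
  have hxa : x < a := hx.2.lt_of_ne (by rintro rfl; exact hfa.ne' hfx)
  have hxm : x < m := hxa.trans ha
  refine ⟨x, ⟨hxa, hfx, fun β hβ => ?_, fun β hβ hβm => ?_⟩, ?_⟩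
  · exact hfx ▸ hmono (hβ.trans hxm) hxm hβ
  · exact hfx ▸ hmono hxm hβm hβ
  · rintro y ⟨hya, hfy, -, -⟩
    exact hmono.injOn (hya.trans ha) hxm (hfy.trans hfx.symm)

/-- `g 0 = 1` and `g β → 1 - n` as `β → -∞`; consequently there is a unique
`β̄ < 0` with `g β̄ = 0`, and `g < 0` on `(-∞, β̄)` while `g > 0` on `(β̄, μ 0)`. -/
theorem stmt_1 (n : ℕ) (hn : 2 ≤ n) (μ : Fin n → ℝ) (hμpos : ∀ k, 0 < μ k)
    (hμmono : Monotone μ) (g : ℝ → ℝ)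
    (hg : ∀ β : ℝ, g β = 1 + β * ∑ k, 1 / (μ k - β)) :
    g 0 = 1 ∧
    Filter.Tendsto g Filter.atBot (nhds (1 - (n : ℝ))) ∧
    ∃! βbar : ℝ, βbar < 0 ∧ g βbar = 0 ∧
      (∀ β < βbar, g β < 0) ∧
      (∀ β : ℝ, βbar < β → β < μ ⟨0, by omega⟩ → 0 < g β) := by
  have : NeZero n := ⟨by omega⟩
  have hg' : g = fun β => 1 + ∑ k, β / (μ k - β) := by
    ext β
    simp only [hg, Finset.mul_sum, mul_one_div]
  have hμ₀ : ∀ k, μ ⟨0, by omega⟩ ≤ μ k := fun k => hμmono (Fin.zero_le k)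
  have hg0 : g 0 = 1 := by simp [hg]
  have hlim : Tendsto g atBot (𝓝 (1 - n)) := by
    simpa [hg', sub_eq_add_neg] using (tendsto_sum_div_sub_self_atBot μ).const_add 1
  have hmono : StrictMonoOn g (Iio (μ ⟨0, by omega⟩)) :=
    hg' ▸ (strictMonoOn_sum_div_sub_self hμpos hμ₀).const_add 1
  have hcont : ContinuousOn g (Iio (μ ⟨0, by omega⟩)) :=
    hg' ▸ continuousOn_const.add (continuousOn_sum_div_sub_self hμ₀)
  have hlim_neg : (1 - n : ℝ) < 0 := by
    have : (2 : ℝ) ≤ n := by exact_mod_cast hn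
    linarith
  obtain ⟨b, hgb, hb⟩ :=
    ((hlim.eventually (gt_mem_nhds hlim_neg)).and (eventually_lt_atBot _)).exists
  exact ⟨hg0, hlim, hmono.existsUnique_sign_change hcont (hμpos _) (hg0 ▸ one_pos) hb hgb⟩
end

section
/- Let S be a finite set and let A, B ⊆ S be nonempty proper subsets with B ≠ A and B ≠ S ∖ A. Then the equivalence relation on S generated by the relation R, where i R j holds if and only if ({i, j} ⊆ A or {i, j} ⊆ S ∖ A) or ({i, j} ⊆ B or {i, j} ⊆ S ∖ B), is the total relation on S (every two elements of S are equivalent). -/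
/-- Let `S` be a finite set and `A, B ⊆ S` nonempty proper subsets with
`B ≠ A` and `B ≠ S \ A`. Then the equivalence relation generated by the
relation "`i` and `j` lie in a common block of `{A, Aᶜ}` or of `{B, Bᶜ}`"
is the total relation on `S`. -/
theorem stmt_17 (S : Type*) [Fintype S] (A B : Set S)
    (hA : A.Nonempty) (hA' : A ≠ Set.univ)
    (hB : B.Nonempty) (hB' : B ≠ Set.univ)
    (hBA : B ≠ A) (hBAc : B ≠ Aᶜ) :
    ∀ i j : S,
      Relation.EqvGen (fun i j =>
        ((i ∈ A ∧ j ∈ A) ∨ (i ∈ Aᶜ ∧ j ∈ Aᶜ)) ∨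
        ((i ∈ B ∧ j ∈ B) ∨ (i ∈ Bᶜ ∧ j ∈ Bᶜ))) i j := by
  set r : S → S → Prop := fun i j =>
    ((i ∈ A ∧ j ∈ A) ∨ (i ∈ Aᶜ ∧ j ∈ Aᶜ)) ∨
      ((i ∈ B ∧ j ∈ B) ∨ (i ∈ Bᶜ ∧ j ∈ Bᶜ)) with hrdef
  have key : ∃ x y, x ∈ A ∧ y ∈ Aᶜ ∧
      ((x ∈ B ∧ y ∈ B) ∨ (x ∈ Bᶜ ∧ y ∈ Bᶜ)) := by
    by_contra h
    push_neg at h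
    -- B ⊆ A or B ⊆ Aᶜ
    have hBsub : B ⊆ A ∨ B ⊆ Aᶜ := by
      by_cases hba : ∃ b ∈ B, b ∈ A
      · obtain ⟨b0, hb0B, hb0A⟩ := hba
        left
        intro b hb
        by_contra hbA
        exact (h b0 b hb0A hbA).1 hb0B hb
      · right
        intro b hb
        push_neg at hba
        exact hba b hb
    have hBcsub : Bᶜ ⊆ A ∨ Bᶜ ⊆ Aᶜ := by
      by_cases hba : ∃ b ∈ Bᶜ, b ∈ A
      · obtain ⟨b0, hb0B, hb0A⟩ := hba
        left
        intro b hb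
        by_contra hbA
        exact (h b0 b hb0A hbA).2 hb0B hb
      · right
        intro b hb
        push_neg at hba
        exact hba b hb
    rcases hBsub with h1 | h1 <;> rcases hBcsub with h2 | h2
    · exact hA' (Set.eq_univ_of_univ_subset (by
        intro x _
        by_cases hx : x ∈ B
        · exact h1 hx
        · exact h2 hx))
    · exact hBA (Set.Subset.antisymm h1 (fun x hx => by
        by_contra hxB
        exact (h2 hxB) hx))
    · exact hBAc (Set.Subset.antisymm h1 (fun x hx => by
        by_contra hxB
        exact hx (h2 hxB)))
    · obtain ⟨a, ha⟩ := hA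
      by_cases haB : a ∈ B
      · exact (h1 haB) ha
      · exact (h2 haB) ha
  obtain ⟨x, y, hx, hy, hbr⟩ := key
  have hxy : Relation.EqvGen r x y := Relation.EqvGen.rel _ _ (Or.inr hbr)
  have conn : ∀ z, Relation.EqvGen r z x := by
    intro z
    by_cases hz : z ∈ A
    · exact Relation.EqvGen.rel _ _ (Or.inl (Or.inl ⟨hz, hx⟩))
    · exact Relation.EqvGen.trans _ _ _
        (Relation.EqvGen.rel _ _ (Or.inl (Or.inr ⟨hz, hy⟩)))
        (Relation.EqvGen.symm _ _ hxy)
  intro i j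
  exact Relation.EqvGen.trans _ _ _ (conn i) (Relation.EqvGen.symm _ _ (conn j))
end
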